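/- arXiv:1701.00076 — 4 statements merged into one kernel-verified Lean document; each statement's English description precedes it below -/
import Mathlib

section
/- (Asymptotic behavior of B̃(−t).) Let 0 < p < 1, n ≥ 1, and let λ ∈ ℂ be nonzero with |arg λ| < pπ/2. Then α := Re(λ^{1/p}) > 0, and there exist constants c₀, …, c_{n−1} > 0 such that for all t > 0, ‖B̃_n(−t,λ)‖ ≤ ∑_{m=0}^{n−1} (c_m / p^{m+1}) t^{m+1} e^{−tα}, where ‖·‖ is the operator norm on n×n complex matrices. -/
open Filter Asymptotics MeasureTheory

noncomputable def psi (p : ℝ) (m : ℕ) (t : ℝ) (lam : ℂ) : ℂ :=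
  (1 / (m.factorial : ℂ)) *
    iteratedDeriv m (fun z : ℂ => (1 / (p : ℂ)) * Complex.exp ((t : ℂ) * z ^ (1 / (p : ℂ)))) lam

noncomputable def psiT (p : ℝ) (m : ℕ) (t : ℝ) (lam : ℂ) : ℂ :=
  (1 / (m.factorial : ℂ)) *
    iteratedDeriv (m + 1) (fun z : ℂ => Complex.exp ((t : ℂ) * z ^ (1 / (p : ℂ)))) lam

noncomputable def mlEM {ι : Type*} [Fintype ι] [DecidableEq ι] (p β : ℝ) (M : Matrix ι ι ℂ) :
    Matrix ι ι ℂ :=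
  ∑' k : ℕ, (Complex.Gamma ((p * k + β : ℝ) : ℂ))⁻¹ • M ^ k

def jordanBlock (n : ℕ) (lam : ℂ) : Matrix (Fin n) (Fin n) ℂ :=
  Matrix.of fun i j => if i = j then lam else if (i : ℕ) + 1 = (j : ℕ) then 1 else 0

noncomputable def BMat (p : ℝ) (n : ℕ) (t : ℝ) (lam : ℂ) : Matrix (Fin n) (Fin n) ℂ :=
  Matrix.of fun i j => if (i : ℕ) ≤ (j : ℕ) then psi p ((j : ℕ) - (i : ℕ)) t lam else 0

noncomputable def BTMat (p : ℝ) (n : ℕ) (t : ℝ) (lam : ℂ) : Matrix (Fin n) (Fin n) ℂ :=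
  Matrix.of fun i j => if (i : ℕ) ≤ (j : ℕ) then psiT p ((j : ℕ) - (i : ℕ)) t lam else 0

noncomputable def opNorm {ι : Type*} [Fintype ι] [DecidableEq ι] (M : Matrix ι ι ℂ) : ℝ :=
  ‖LinearMap.toContinuousLinearMap (Matrix.toEuclideanLin M)‖

/-
By induction on `k`, the `(k + 1)`-st derivative of `z ↦ exp (w z ^ (1/p))` on the slit plane is
`exp (w z ^ (1/p))` times a polynomial in `w` of degree at most `k + 1` with no constant term,
whose coefficients are analytic in `z`. At `w = -t` the exponential has modulus `exp (-t α)`, so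
every entry of `B̃_n(-t, λ)` is bounded by `(∑ j < n, d_j t ^ (j + 1)) exp (-t α)`, and the
operator norm is at most the sum of the moduli of the entries. Finally `α > 0` because
`λ ^ (1/p)` has argument `arg λ / p ∈ (-π/2, π/2)`.
-/

open Complex Finset Filter Topology

lemma exists_iteratedDeriv_succ_exp_mul_eq {f : ℂ → ℂ} {U : Set ℂ} (hU : IsOpen U)
    (hf : AnalyticOnNhd ℂ f U) (k : ℕ) :
    ∃ a : ℕ → ℂ → ℂ, (∀ j, AnalyticOnNhd ℂ (a j) U) ∧ ∀ (w : ℂ), ∀ z ∈ U,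
      iteratedDeriv (k + 1) (fun ζ => cexp (w * f ζ)) z
        = cexp (w * f z) * ∑ j ∈ range (k + 1), a j z * w ^ (j + 1) := by
  have hexp : ∀ w, ∀ z ∈ U,
      HasDerivAt (fun ζ => cexp (w * f ζ)) (cexp (w * f z) * (w * deriv f z)) z :=
    fun w z hz => ((hf z hz).differentiableAt.hasDerivAt.const_mul w).cexp
  induction k with
  | zero =>
    refine ⟨fun _ => deriv f, fun _ => hf.deriv, fun w z hz => ?_⟩
    simp only [zero_add, iteratedDeriv_one, (hexp w z hz).deriv, range_one, sum_singleton]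
    ring
  | succ k ih =>
    obtain ⟨a, ha, hder⟩ := ih
    -- `(exp (w f) * ∑ a j w ^ (j + 1))' = exp (w f) * ∑ (a j' + f' a (j - 1)) w ^ (j + 1)`;
    -- the `if`s discard the out-of-range terms `a (k + 1)` and `a (-1)`.
    refine ⟨fun j => (if j < k + 1 then deriv (a j) else 0) +
      (if j = 0 then 0 else deriv f * a (j - 1)), fun j => ?_, fun w z hz => ?_⟩
    · refine AnalyticOnNhd.add ?_ ?_ <;> split_ifs
      exacts [(ha j).deriv, analyticOnNhd_const, analyticOnNhd_const, hf.deriv.mul (ha _)]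
    · have hev : iteratedDeriv (k + 1) (fun ζ => cexp (w * f ζ)) =ᶠ[𝓝 z]
          fun ζ => cexp (w * f ζ) * ∑ j ∈ range (k + 1), a j ζ * w ^ (j + 1) :=
        eventually_of_mem (hU.mem_nhds hz) (hder w)
      have hsum : HasDerivAt (fun ζ => ∑ j ∈ range (k + 1), a j ζ * w ^ (j + 1))
          (∑ j ∈ range (k + 1), deriv (a j) z * w ^ (j + 1)) z :=
        HasDerivAt.fun_sum fun j _ => ((ha j z hz).differentiableAt.hasDerivAt).mul_const _
      rw [iteratedDeriv_succ, hev.deriv_eq, ((hexp w z hz).fun_mul hsum).deriv]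
      have hlow : ∑ j ∈ range (k + 2), (if j < k + 1 then deriv (a j) else 0) z * w ^ (j + 1)
          = ∑ j ∈ range (k + 1), deriv (a j) z * w ^ (j + 1) := by
        rw [sum_range_succ, if_neg (lt_irrefl _), Pi.zero_apply, zero_mul, add_zero]
        exact sum_congr rfl fun j hj => by rw [if_pos (mem_range.mp hj)]
      have hhigh : ∑ j ∈ range (k + 2), (if j = 0 then 0 else deriv f * a (j - 1)) z * w ^ (j + 1)
          = w * deriv f z * ∑ j ∈ range (k + 1), a j z * w ^ (j + 1) := by
        rw [sum_range_succ', mul_sum]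
        simp only [Nat.add_one_ne_zero, if_false, if_true, Nat.add_sub_cancel, Pi.zero_apply,
          zero_mul, add_zero]
        exact sum_congr rfl fun j _ => by simp only [Pi.mul_apply]; ring
      simp only [Pi.add_apply, add_mul, sum_add_distrib, hlow, hhigh]
      ring

lemma EuclideanSpace.norm_le_sum_norm {𝕜 ι : Type*} [RCLike 𝕜] [Fintype ι]
    (x : EuclideanSpace 𝕜 ι) :
    ‖x‖ ≤ ∑ i, ‖x i‖ := by
  rw [EuclideanSpace.norm_eq, Real.sqrt_le_left (by positivity)]
  exact sum_sq_le_sq_sum_of_nonneg fun i _ => norm_nonneg _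

lemma opNorm_le_sum_norm_entries {ι : Type*} [Fintype ι] [DecidableEq ι] (M : Matrix ι ι ℂ) :
    opNorm M ≤ ∑ i, ∑ j, ‖M i j‖ := by
  refine ContinuousLinearMap.opNorm_le_bound _ (by positivity) fun x => ?_
  calc ‖Matrix.toEuclideanLin M x‖ ≤ ∑ i, ‖Matrix.toEuclideanLin M x i‖ :=
        EuclideanSpace.norm_le_sum_norm _
    _ ≤ ∑ i, ∑ j, ‖M i j‖ * ‖x‖ := by
        refine sum_le_sum fun i _ => (norm_sum_le _ _).trans (sum_le_sum fun j _ => ?_)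
        rw [norm_mul]
        gcongr
        exact PiLp.norm_apply_le x j
    _ = (∑ i, ∑ j, ‖M i j‖) * ‖x‖ := by simp only [sum_mul]

lemma norm_BTMat_apply_le (p : ℝ) (n : ℕ) (t : ℝ) (lam : ℂ) (i j : Fin n) :
    ‖BTMat p n t lam i j‖ ≤ ∑ m ∈ range n, ‖psiT p m t lam‖ := by
  rw [BTMat, Matrix.of_apply]
  split_ifs
  · exact single_le_sum (f := fun m => ‖psiT p m t lam‖) (fun _ _ => norm_nonneg _)
      (mem_range.mpr (by omega))
  · simpa using sum_nonneg fun m _ => norm_nonneg (psiT p m t lam)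

lemma opNorm_BTMat_le (p : ℝ) (n : ℕ) (t : ℝ) (lam : ℂ) :
    opNorm (BTMat p n t lam) ≤ n ^ 2 * ∑ m ∈ range n, ‖psiT p m t lam‖ := by
  refine (opNorm_le_sum_norm_entries _).trans ?_
  calc _ ≤ ∑ _i : Fin n, ∑ _j : Fin n, ∑ m ∈ range n, ‖psiT p m t lam‖ :=
        sum_le_sum fun i _ => sum_le_sum fun j _ => norm_BTMat_apply_le p n t lam i j
    _ = _ := by simp [sq, mul_assoc]

lemma mem_slitPlane_of_abs_arg_lt {z : ℂ} (hz : z ≠ 0) (harg : |arg z| < Real.pi) :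
    z ∈ slitPlane :=
  mem_slitPlane_iff_arg.mpr ⟨fun h => by simp [h, abs_of_pos Real.pi_pos] at harg, hz⟩

lemma re_cpow_one_div_pos {z : ℂ} {p : ℝ} (hp : 0 < p) (hz : z ≠ 0)
    (harg : |arg z| < p * Real.pi / 2) : 0 < (z ^ (1 / (p : ℂ))).re := by
  have him : (log z * (1 / (p : ℂ))).im = arg z / p := by
    rw [← ofReal_one, ← ofReal_div, im_mul_ofReal, log_im, mul_one_div]
  rw [cpow_def_of_ne_zero hz, exp_re, him]
  refine mul_pos (Real.exp_pos _) (Real.cos_pos_of_mem_Ioo (abs_lt.mp ?_))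
  rw [abs_div, abs_of_pos hp, div_lt_iff₀ hp]
  linarith

lemma norm_psiT_neg_le {p t : ℝ} {lam : ℂ} {m : ℕ} {b : ℕ → ℂ}
    (hb : ∀ w : ℂ, iteratedDeriv (m + 1) (fun z : ℂ => cexp (w * z ^ (1 / (p : ℂ)))) lam
      = cexp (w * lam ^ (1 / (p : ℂ))) * ∑ j ∈ range (m + 1), b j * w ^ (j + 1))
    (ht : 0 ≤ t) :
    ‖psiT p m (-t) lam‖
      ≤ (∑ j ∈ range (m + 1), ‖b j‖ * t ^ (j + 1)) * Real.exp (-t * (lam ^ (1 / (p : ℂ))).re) := by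
  have hfact : ‖1 / (m.factorial : ℂ)‖ ≤ 1 := by
    rw [norm_div, norm_one, norm_natCast]
    exact div_le_one_of_le₀ (mod_cast m.factorial_pos) (by positivity)
  have hpoly : ‖∑ j ∈ range (m + 1), b j * ((-t : ℝ) : ℂ) ^ (j + 1)‖
      ≤ ∑ j ∈ range (m + 1), ‖b j‖ * t ^ (j + 1) := by
    refine (norm_sum_le _ _).trans (sum_le_sum fun j _ => ?_)
    rw [norm_mul, norm_pow, norm_real, Real.norm_eq_abs, abs_neg, abs_of_nonneg ht]
  rw [psiT, hb, norm_mul, norm_mul, norm_exp, re_ofReal_mul, mul_comm (Real.exp _)]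
  calc _ ≤ 1 * (‖∑ j ∈ range (m + 1), b j * ((-t : ℝ) : ℂ) ^ (j + 1)‖ *
        Real.exp (-t * (lam ^ (1 / (p : ℂ))).re)) :=
        mul_le_mul_of_nonneg_right hfact (by positivity)
    _ ≤ _ := by rw [one_mul]; exact mul_le_mul_of_nonneg_right hpoly (Real.exp_pos _).le

lemma sum_norm_psiT_neg_le {p t : ℝ} {lam : ℂ} (n : ℕ) {b : ℕ → ℕ → ℂ}
    (hb : ∀ m, ∀ w : ℂ, iteratedDeriv (m + 1) (fun z : ℂ => cexp (w * z ^ (1 / (p : ℂ)))) lam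
      = cexp (w * lam ^ (1 / (p : ℂ))) * ∑ j ∈ range (m + 1), b m j * w ^ (j + 1))
    (ht : 0 ≤ t) :
    ∑ m ∈ range n, ‖psiT p m (-t) lam‖
      ≤ ∑ j ∈ range n, (∑ m ∈ range n, ‖b m j‖) * t ^ (j + 1)
          * Real.exp (-t * (lam ^ (1 / (p : ℂ))).re) := by
  calc _ ≤ ∑ m ∈ range n, (∑ j ∈ range (m + 1), ‖b m j‖ * t ^ (j + 1))
        * Real.exp (-t * (lam ^ (1 / (p : ℂ))).re) :=
        sum_le_sum fun m _ => norm_psiT_neg_le (hb m) ht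
    _ ≤ ∑ m ∈ range n, (∑ j ∈ range n, ‖b m j‖ * t ^ (j + 1))
        * Real.exp (-t * (lam ^ (1 / (p : ℂ))).re) := by
        gcongr with m hm
        exact mem_range.mp hm
    _ = _ := by simp only [sum_mul]; rw [sum_comm]

theorem stmt_4_general (p : ℝ) (hp0 : 0 < p) (hp1 : p < 1)
    (n : ℕ) (lam : ℂ) (hlam : lam ≠ 0)
    (harg : |Complex.arg lam| < p * Real.pi / 2) :
    0 < (lam ^ (1 / (p : ℂ))).re ∧
      ∃ c : ℕ → ℝ, (∀ m < n, 0 < c m) ∧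
        ∀ t > (0 : ℝ),
          opNorm (BTMat p n (-t) lam)
            ≤ ∑ m ∈ Finset.range n,
                c m / p ^ (m + 1) * t ^ (m + 1)
                  * Real.exp (-t * (lam ^ (1 / (p : ℂ))).re) := by
  have hslit : lam ∈ slitPlane := mem_slitPlane_of_abs_arg_lt hlam
    (harg.trans (by nlinarith [Real.pi_pos] : p * Real.pi / 2 < Real.pi))
  refine ⟨re_cpow_one_div_pos hp0 hlam harg, ?_⟩
  choose a _ ha using exists_iteratedDeriv_succ_exp_mul_eq isOpen_slitPlane
    (analyticOnNhd_id.cpow analyticOnNhd_const fun _ hz => hz :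
      AnalyticOnNhd ℂ (fun z : ℂ => z ^ (1 / (p : ℂ))) slitPlane)
  refine ⟨fun j => p ^ (j + 1) * (n ^ 2 * ∑ m ∈ range n, ‖a m j lam‖ + 1),
    fun m _ => by positivity, fun t ht => ?_⟩
  calc opNorm (BTMat p n (-t) lam) ≤ n ^ 2 * ∑ m ∈ range n, ‖psiT p m (-t) lam‖ :=
        opNorm_BTMat_le p n (-t) lam
    _ ≤ n ^ 2 * ∑ j ∈ range n, (∑ m ∈ range n, ‖a m j lam‖) * t ^ (j + 1)
          * Real.exp (-t * (lam ^ (1 / (p : ℂ))).re) :=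
        mul_le_mul_of_nonneg_left (sum_norm_psiT_neg_le n (fun m w => ha m w lam hslit) ht.le)
          (by positivity)
    _ ≤ _ := by
        rw [mul_sum]
        refine sum_le_sum fun j _ => ?_
        rw [mul_div_cancel_left₀ _ (by positivity)]
        nlinarith [(by positivity : 0 ≤ t ^ (j + 1) * Real.exp (-t * (lam ^ (1 / (p : ℂ))).re))]

theorem stmt_4 (p : ℝ) (hp0 : 0 < p) (hp1 : p < 1)
    (n : ℕ) (hn : 1 ≤ n) (lam : ℂ) (hlam : lam ≠ 0)
    (harg : |Complex.arg lam| < p * Real.pi / 2) :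
    0 < (lam ^ (1 / (p : ℂ))).re ∧
      ∃ c : ℕ → ℝ, (∀ m < n, 0 < c m) ∧
        ∀ t > (0 : ℝ),
          opNorm (BTMat p n (-t) lam)
            ≤ ∑ m ∈ Finset.range n,
                c m / p ^ (m + 1) * t ^ (m + 1)
                  * Real.exp (-t * (lam ^ (1 / (p : ℂ))).re) :=
  stmt_4_general p hp0 hp1 n lam hlam harg
end

section
/- (Corrected Lemma 6, scalar form.) Let 0 < p < 1, let λ ∈ ℂ \ (−∞,0], let m ∈ ℕ, and let t, τ > 0. Then (t − τ) ∑_{i=0}^{m} Ψ_i(t,λ) Ψ̃_{m−i}(−τ,λ) = (−τ/p) Ψ̃_m(t−τ, λ). -/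
/-!
Write `E_s(z) = exp (s z^{1/p})`. Then `E_t E_u = E_{t+u}` and `E_s' = s (z^{1/p})' E_s`, so
`(t + u) E_t E_u' = u E_{t+u}'` as functions near `λ`. Taking `m`-th Taylor coefficients at `λ`,
Leibniz's rule turns the left side into the Cauchy product `∑ Ψ_i(t) Ψ̃_{m-i}(u)` (up to the
factor `1/p` in `Ψ`), and `u = -τ` gives the identity.
-/

open Filter Topology Finset

section TaylorCoeff

variable {𝕜 : Type*} [NontriviallyNormedField 𝕜]

noncomputable def taylorCoeff (n : ℕ) (f : 𝕜 → 𝕜) (x : 𝕜) : 𝕜 :=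
  (1 / (n.factorial : 𝕜)) * iteratedDeriv n f x

theorem taylorCoeff_const_mul (n : ℕ) (c : 𝕜) (f : 𝕜 → 𝕜) (x : 𝕜) :
    taylorCoeff n (fun z => c * f z) x = c * taylorCoeff n f x := by
  simp only [taylorCoeff, iteratedDeriv_const_mul_field]
  ring

theorem Filter.EventuallyEq.taylorCoeff_eq {f g : 𝕜 → 𝕜} {x : 𝕜} (h : f =ᶠ[𝓝 x] g)
    (n : ℕ) :
    taylorCoeff n f x = taylorCoeff n g x := by
  rw [taylorCoeff, taylorCoeff, h.iteratedDeriv_eq]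

theorem taylorCoeff_mul [CharZero 𝕜] {n : ℕ} {f g : 𝕜 → 𝕜} {x : 𝕜}
    (hf : ContDiffAt 𝕜 n f x) (hg : ContDiffAt 𝕜 n g x) :
    taylorCoeff n (fun z => f z * g z) x =
      ∑ i ∈ range (n + 1), taylorCoeff i f x * taylorCoeff (n - i) g x := by
  rw [taylorCoeff, iteratedDeriv_fun_mul hf hg, mul_sum]
  refine sum_congr rfl fun i hi => ?_
  have hin : i ≤ n := Nat.lt_succ_iff.mp (mem_range.mp hi)
  have hchoose : (n.choose i * i.factorial * (n - i).factorial : 𝕜) = n.factorial := by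
    exact_mod_cast Nat.choose_mul_factorial_mul_factorial hin
  have hc : (n.choose i : 𝕜) ≠ 0 := Nat.cast_ne_zero.mpr (Nat.choose_pos hin).ne'
  have hi : (i.factorial : 𝕜) ≠ 0 := Nat.cast_ne_zero.mpr i.factorial_ne_zero
  have hni : ((n - i).factorial : 𝕜) ≠ 0 := Nat.cast_ne_zero.mpr (n - i).factorial_ne_zero
  rw [taylorCoeff, taylorCoeff, ← hchoose]
  field_simp

end TaylorCoeff

theorem deriv_cexp_mul {g : ℂ → ℂ} {z : ℂ} (hg : DifferentiableAt ℂ g z) (s : ℂ) :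
    deriv (fun w => Complex.exp (s * g w)) z = s * deriv g z * Complex.exp (s * g z) := by
  rw [((hg.hasDerivAt.const_mul s).cexp).deriv]
  ring

theorem cexp_mul_mul_deriv_cexp_mul_eventuallyEq {g : ℂ → ℂ} {x : ℂ}
    (hg : ∀ᶠ z in 𝓝 x, DifferentiableAt ℂ g z) (s u : ℂ) :
    (fun z => (s + u) * (Complex.exp (s * g z) * deriv (fun w => Complex.exp (u * g w)) z))
      =ᶠ[𝓝 x] fun z => u * deriv (fun w => Complex.exp ((s + u) * g w)) z := by
  filter_upwards [hg] with z hz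
  rw [deriv_cexp_mul hz, deriv_cexp_mul hz, add_mul s u (g z), Complex.exp_add]
  ring

theorem analyticAt_cexp_mul_cpow {x : ℂ} (hx : x ∈ Complex.slitPlane) (s a : ℂ) :
    AnalyticAt ℂ (fun z => Complex.exp (s * z ^ a)) x :=
  (analyticAt_const.mul (analyticAt_id.cpow analyticAt_const hx)).cexp

theorem stmt_5_general (p : ℝ) (lam : ℂ)
    (hslit : 0 < lam.re ∨ lam.im ≠ 0) (m : ℕ)
    (t τ : ℝ) :
    ((t - τ : ℝ) : ℂ) * ∑ i ∈ Finset.range (m + 1), psi p i t lam * psiT p (m - i) (-τ) lam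
      = (-(τ : ℂ) / (p : ℂ)) * psiT p m (t - τ) lam := by
  set E : ℂ → ℂ → ℂ := fun s z => Complex.exp (s * z ^ (1 / (p : ℂ)))
  have hlam : lam ∈ Complex.slitPlane := hslit
  have hpsi (i : ℕ) : psi p i t lam = 1 / (p : ℂ) * taylorCoeff i (E t) lam := by
    rw [← taylorCoeff_const_mul]; rfl
  have hpsiT (k : ℕ) (s : ℝ) : psiT p k s lam = taylorCoeff k (deriv (E s)) lam := by
    rw [psiT, iteratedDeriv_succ']; rfl
  have key := cexp_mul_mul_deriv_cexp_mul_eventuallyEq (g := fun z => z ^ (1 / (p : ℂ)))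
    (Complex.isOpen_slitPlane.eventually_mem hlam |>.mono fun z hz =>
      differentiableAt_id.cpow_const hz) t (-τ : ℝ)
  have hct : ((t - τ : ℝ) : ℂ) = t + (-τ : ℝ) := by push_cast; ring
  calc ((t - τ : ℝ) : ℂ) * ∑ i ∈ range (m + 1), psi p i t lam * psiT p (m - i) (-τ) lam
      = 1 / p * taylorCoeff m
          (fun z => ((t - τ : ℝ) : ℂ) * (E t z * deriv (E (-τ : ℝ)) z)) lam := by
        rw [taylorCoeff_const_mul, taylorCoeff_mul
          ((analyticAt_cexp_mul_cpow hlam _ _).contDiffAt)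
          ((analyticAt_cexp_mul_cpow hlam _ _).deriv.contDiffAt), mul_sum, mul_sum, mul_sum]
        refine sum_congr rfl fun i _ => ?_
        rw [hpsi, hpsiT]
        ring
    _ = 1 / p * taylorCoeff m (fun z => (-τ : ℝ) * deriv (E (t - τ : ℝ)) z) lam := by
        rw [hct, key.taylorCoeff_eq]
    _ = -(τ : ℂ) / p * psiT p m (t - τ) lam := by
        rw [taylorCoeff_const_mul, hpsiT]
        push_cast
        ring

theorem stmt_5 (p : ℝ) (hp0 : 0 < p) (hp1 : p < 1) (lam : ℂ)
    (hslit : 0 < lam.re ∨ lam.im ≠ 0) (m : ℕ)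
    (t τ : ℝ) (ht : 0 < t) (hτ : 0 < τ) :
    ((t - τ : ℝ) : ℂ) * ∑ i ∈ Finset.range (m + 1), psi p i t lam * psiT p (m - i) (-τ) lam
      = (-(τ : ℂ) / (p : ℂ)) * psiT p m (t - τ) lam :=
  stmt_5_general p lam hslit m t τ
end

section
/- (Corrected Lemma 6, matrix form.) In the block-diagonal Jordan setting, for all t, τ > 0 one has the matrix identity (t − τ) · B(t) · B̃(−τ) = (−τ/p) · B̃(t − τ). -/
open MeasureTheory Filter

noncomputable def mlE (p β : ℝ) (z : ℂ) : ℂ :=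
  ∑' k : ℕ, z ^ k / Complex.Gamma ((p * k + β : ℝ) : ℂ)

noncomputable def mlER (p β x : ℝ) : ℝ :=
  ∑' k : ℕ, x ^ k / Real.Gamma (p * k + β)

noncomputable def mvE {ι : Type*} [Fintype ι] [DecidableEq ι] (M : Matrix ι ι ℂ)
    (v : EuclideanSpace ℂ ι) : EuclideanSpace ℂ ι :=
  Matrix.toEuclideanLin M v

def BC {E : Type*} [NormedAddCommGroup E] (x : ℝ → E) : Prop :=
  ContinuousOn x (Set.Ici 0) ∧ ∃ C, ∀ t : ℝ, 0 ≤ t → ‖x t‖ ≤ C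

noncomputable def supNorm {E : Type*} [NormedAddCommGroup E] (x : ℝ → E) : ℝ :=
  ⨆ t : Set.Ici (0 : ℝ), ‖x (t : ℝ)‖

structure JordanSetting where
  p : ℝ
  hp0 : 0 < p
  hp1 : p < 1
  l : ℕ
  s : ℕ
  hsl : s ≤ l
  nsz : Fin l → ℕ
  hnsz : ∀ j, 1 ≤ nsz j
  eig : Fin l → ℂ
  heig : ∀ j, eig j ≠ 0
  hstable : ∀ j : Fin l, (j : ℕ) < s → p * Real.pi / 2 < |Complex.arg (eig j)|
  hunstable : ∀ j : Fin l, s ≤ (j : ℕ) → |Complex.arg (eig j)| < p * Real.pi / 2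

abbrev JordanSetting.ix (S : JordanSetting) : Type := Σ j : Fin S.l, Fin (S.nsz j)

abbrev ES (S : JordanSetting) : Type := EuclideanSpace ℂ S.ix

noncomputable def JordanSetting.A (S : JordanSetting) : Matrix S.ix S.ix ℂ :=
  Matrix.blockDiagonal' fun j => jordanBlock (S.nsz j) (S.eig j)

noncomputable def JordanSetting.B (S : JordanSetting) (t : ℝ) : Matrix S.ix S.ix ℂ :=
  Matrix.blockDiagonal' fun j =>
    if (j : ℕ) < S.s then 0 else BMat S.p (S.nsz j) t (S.eig j)

noncomputable def JordanSetting.Bt (S : JordanSetting) (t : ℝ) : Matrix S.ix S.ix ℂ :=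
  Matrix.blockDiagonal' fun j =>
    if (j : ℕ) < S.s then 0 else BTMat S.p (S.nsz j) t (S.eig j)

noncomputable def JordanSetting.piu (S : JordanSetting) (v : ES S) : ES S :=
  (WithLp.equiv 2 (S.ix → ℂ)).symm fun i =>
    if S.s ≤ (i.1 : ℕ) then (WithLp.equiv 2 (S.ix → ℂ)) v i else 0

noncomputable def JordanSetting.pis (S : JordanSetting) (v : ES S) : ES S :=
  (WithLp.equiv 2 (S.ix → ℂ)).symm fun i =>
    if (i.1 : ℕ) < S.s then (WithLp.equiv 2 (S.ix → ℂ)) v i else 0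

noncomputable def JordanSetting.EP (S : JordanSetting) (t : ℝ) : Matrix S.ix S.ix ℂ :=
  mlEM S.p 1 (((t ^ S.p : ℝ) : ℂ) • S.A)

noncomputable def JordanSetting.EPP (S : JordanSetting) (t : ℝ) : Matrix S.ix S.ix ℂ :=
  mlEM S.p S.p (((t ^ S.p : ℝ) : ℂ) • S.A)

noncomputable def JordanSetting.T (S : JordanSetting) (f : ES S → ES S) (σ : ES S)
    (x : ℝ → ES S) (t : ℝ) : ES S :=
  mvE (S.EP t) σ
    + mvE (S.EP t) (∫ τ in Set.Ioi (0 : ℝ), (S.p / τ) • mvE (S.Bt (-τ)) (S.piu (f (x τ))))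
    + ∫ τ in Set.Ioc (0 : ℝ) t, ((t - τ) ^ (S.p - 1)) • mvE (S.EPP (t - τ)) (f (x τ))


section Aux
open Finset

open Finset

lemma iteratedDeriv_add_on {U : Set ℂ} (hU : IsOpen U) {x : ℂ} (hx : x ∈ U) :
    ∀ (m : ℕ) (f g : ℂ → ℂ), AnalyticOnNhd ℂ f U → AnalyticOnNhd ℂ g U →
    iteratedDeriv m (fun z => f z + g z) x = iteratedDeriv m f x + iteratedDeriv m g x := by
  intro m
  induction m with
  | zero => intro f g _ _; simp
  | succ m ih =>
    intro f g hf hg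
    have hev : (deriv fun z => f z + g z) =ᶠ[nhds x] fun z => deriv f z + deriv g z := by
      filter_upwards [hU.mem_nhds hx] with y hy
      exact deriv_add ((hf y hy).differentiableAt) ((hg y hy).differentiableAt)
    rw [iteratedDeriv_succ', hev.iteratedDeriv_eq m,
      ih _ _ (hf.deriv_of_isOpen hU) (hg.deriv_of_isOpen hU),
      ← iteratedDeriv_succ', ← iteratedDeriv_succ']

lemma iteratedDeriv_cmul_on {U : Set ℂ} (hU : IsOpen U) {x : ℂ} (hx : x ∈ U) (c : ℂ) :
    ∀ (m : ℕ) (f : ℂ → ℂ), AnalyticOnNhd ℂ f U →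
    iteratedDeriv m (fun z => c * f z) x = c * iteratedDeriv m f x := by
  intro m
  induction m with
  | zero => intro f _; simp
  | succ m ih =>
    intro f hf
    have hev : (deriv fun z => c * f z) =ᶠ[nhds x] fun z => c * deriv f z := by
      filter_upwards [hU.mem_nhds hx] with y hy
      exact deriv_const_mul c ((hf y hy).differentiableAt)
    rw [iteratedDeriv_succ', hev.iteratedDeriv_eq m, ih _ (hf.deriv_of_isOpen hU),
      ← iteratedDeriv_succ']

lemma pascal_sum (m : ℕ) (a b : ℕ → ℂ) :
    ∑ k ∈ range (m+1), (m.choose k : ℂ) * a (k+1) * b (m-k)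
      + ∑ k ∈ range (m+1), (m.choose k : ℂ) * a k * b (m-k+1)
    = ∑ k ∈ range (m+2), ((m+1).choose k : ℂ) * a k * b (m+1-k) := by
  have h3 : ∑ k ∈ range (m+2), ((m+1).choose k : ℂ) * a k * b (m+1-k)
      = ∑ x ∈ range (m+1), ((m+1).choose (x+1) : ℂ) * a (x+1) * b (m-x) + a 0 * b (m+1) := by
    rw [Finset.sum_range_succ' (fun k => ((m+1).choose k : ℂ) * a k * b (m+1-k)) (m+1)]
    simp [Nat.succ_sub_succ]
  have h2 : ∑ k ∈ range (m+1), (m.choose k : ℂ) * a k * b (m-k+1)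
      = ∑ x ∈ range m, (m.choose (x+1) : ℂ) * a (x+1) * b (m-x) + a 0 * b (m+1) := by
    rw [Finset.sum_range_succ' (fun k => (m.choose k : ℂ) * a k * b (m-k+1)) m]
    simp only [Nat.choose_zero_right, Nat.cast_one, one_mul, Nat.sub_zero]
    congr 1
    apply Finset.sum_congr rfl
    intro x hx
    have hx' : m - (x+1) + 1 = m - x := by
      have := Finset.mem_range.mp hx; omega
    rw [hx']
  have h4 : ∑ x ∈ range (m+1), ((m+1).choose (x+1) : ℂ) * a (x+1) * b (m-x)
      = ∑ x ∈ range (m+1), (m.choose x : ℂ) * a (x+1) * b (m-x)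
        + ∑ x ∈ range m, (m.choose (x+1) : ℂ) * a (x+1) * b (m-x) := by
    have hc : ∀ x ∈ range (m+1), ((m+1).choose (x+1) : ℂ) * a (x+1) * b (m-x)
        = (m.choose x : ℂ) * a (x+1) * b (m-x) + (m.choose (x+1) : ℂ) * a (x+1) * b (m-x) := by
      intro x _
      rw [Nat.choose_succ_succ]; push_cast; ring
    rw [Finset.sum_congr rfl hc, Finset.sum_add_distrib]
    congr 1
    rw [Finset.sum_range_succ]
    simp
  rw [h2, h3, h4]; ring

lemma leibniz_on {U : Set ℂ} (hU : IsOpen U) {x : ℂ} (hx : x ∈ U) :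
    ∀ (m : ℕ) (f g : ℂ → ℂ), AnalyticOnNhd ℂ f U → AnalyticOnNhd ℂ g U →
    iteratedDeriv m (fun z => f z * g z) x
      = ∑ k ∈ range (m+1), (m.choose k : ℂ) * iteratedDeriv k f x * iteratedDeriv (m-k) g x := by
  intro m
  induction m with
  | zero => intro f g _ _; simp
  | succ m ih =>
    intro f g hf hg
    have hev : (deriv fun z => f z * g z)
        =ᶠ[nhds x] fun z => deriv f z * g z + f z * deriv g z := by
      filter_upwards [hU.mem_nhds hx] with y hy
      exact deriv_mul ((hf y hy).differentiableAt) ((hg y hy).differentiableAt)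
    rw [iteratedDeriv_succ', hev.iteratedDeriv_eq m,
      iteratedDeriv_add_on hU hx m _ _ ((hf.deriv_of_isOpen hU).mul hg)
        (hf.mul (hg.deriv_of_isOpen hU)),
      ih _ _ (hf.deriv_of_isOpen hU) hg, ih _ _ hf (hg.deriv_of_isOpen hU)]
    simp only [← iteratedDeriv_succ']
    exact pascal_sum m (fun k => iteratedDeriv k f x) (fun k => iteratedDeriv k g x)


noncomputable def fe (p t : ℝ) : ℂ → ℂ := fun z => Complex.exp ((t : ℂ) * z ^ (1 / (p : ℂ)))

lemma fe_analytic (p t : ℝ) : AnalyticOnNhd ℂ (fe p t) Complex.slitPlane := by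
  apply DifferentiableOn.analyticOnNhd _ Complex.isOpen_slitPlane
  intro z hz
  exact ((((hasDerivAt_id z).cpow_const hz).differentiableAt.const_mul
    (t : ℂ)).cexp).differentiableWithinAt

lemma fe_deriv (p t : ℝ) {z : ℂ} (hz : z ∈ Complex.slitPlane) :
    deriv (fe p t) z = (t : ℂ) * (1 / (p : ℂ)) * z ^ ((1 / (p : ℂ)) - 1) * fe p t z := by
  have h1 : HasDerivAt (fun w : ℂ => w ^ (1 / (p : ℂ)))
      ((1 / (p : ℂ)) * z ^ ((1 / (p : ℂ)) - 1) * 1) z := (hasDerivAt_id z).cpow_const hz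
  have h2 := (h1.const_mul (t : ℂ)).cexp
  rw [show fe p t = fun x : ℂ => Complex.exp ((t:ℂ) * x ^ (1 / (p:ℂ))) from rfl, h2.deriv]
  show Complex.exp ((t : ℂ) * z ^ (1 / (p : ℂ))) * ((t:ℂ) * ((1 / (p : ℂ)) * z ^ ((1 / (p : ℂ)) - 1) * 1)) = _
  ring

lemma key_ptwise (p t τ : ℝ) {z : ℂ} (hz : z ∈ Complex.slitPlane) :
    ((t - τ : ℝ) : ℂ) * ((1 / (p : ℂ)) * fe p t z * deriv (fe p (-τ)) z)
      = ((-τ / p : ℝ) : ℂ) * deriv (fe p (t - τ)) z := by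
  rw [fe_deriv p (-τ) hz, fe_deriv p (t - τ) hz]
  have hexp : fe p t z * fe p (-τ) z = fe p (t - τ) z := by
    rw [fe, fe, fe, ← Complex.exp_add]
    congr 1
    push_cast
    ring
  push_cast
  linear_combination (((t:ℂ) - (τ:ℂ)) * (-(τ:ℂ)) * (1/(p:ℂ))^2 * z ^ ((1 / (p : ℂ)) - 1)) * hexp

lemma key_entry (p t τ : ℝ) (m : ℕ) {lam : ℂ} (hl : lam ∈ Complex.slitPlane) :
    ((t - τ : ℝ) : ℂ) * ∑ k ∈ range (m+1), psi p k t lam * psiT p (m-k) (-τ) lam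
      = ((-τ / p : ℝ) : ℂ) * psiT p m (t - τ) lam := by
  set G : ℂ → ℂ := fun z => (1 / (p : ℂ)) * fe p t z with hG
  set H : ℂ → ℂ := deriv (fe p (-τ)) with hH
  have hGa : AnalyticOnNhd ℂ G Complex.slitPlane := analyticOnNhd_const.mul (fe_analytic p t)
  have hHa : AnalyticOnNhd ℂ H Complex.slitPlane :=
    (fe_analytic p (-τ)).deriv_of_isOpen Complex.isOpen_slitPlane
  have hKa : AnalyticOnNhd ℂ (deriv (fe p (t - τ))) Complex.slitPlane :=
    (fe_analytic p (t - τ)).deriv_of_isOpen Complex.isOpen_slitPlane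
  -- rewrite psi, psiT in terms of G, H
  have hpsi : ∀ k, psi p k t lam = (1 / (k.factorial : ℂ)) * iteratedDeriv k G lam := fun k => rfl
  have hpsiT : ∀ (b : ℕ) (σ : ℝ), psiT p b σ lam
      = (1 / (b.factorial : ℂ)) * iteratedDeriv b (deriv (fe p σ)) lam := by
    intro b σ
    rw [psiT, ← iteratedDeriv_succ']
    rfl
  have hsum : ∑ k ∈ range (m+1), psi p k t lam * psiT p (m-k) (-τ) lam
      = (1 / (m.factorial : ℂ)) * iteratedDeriv m (fun z => G z * H z) lam := by
    rw [leibniz_on Complex.isOpen_slitPlane hl m G H hGa hHa, Finset.mul_sum]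
    apply Finset.sum_congr rfl
    intro k hk
    have hkm : k ≤ m := by have := Finset.mem_range.mp hk; omega
    rw [hpsi, hpsiT]
    have hfac : (m.choose k : ℂ) * (k.factorial : ℂ) * ((m-k).factorial : ℂ) = (m.factorial : ℂ) := by
      rw [← Nat.cast_mul, ← Nat.cast_mul, Nat.choose_mul_factorial_mul_factorial hkm]
    have h1 : (k.factorial : ℂ) ≠ 0 := Nat.cast_ne_zero.mpr k.factorial_ne_zero
    have h2 : ((m-k).factorial : ℂ) ≠ 0 := Nat.cast_ne_zero.mpr (m-k).factorial_ne_zero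
    have h3 : (m.factorial : ℂ) ≠ 0 := Nat.cast_ne_zero.mpr m.factorial_ne_zero
    field_simp
    linear_combination (-(iteratedDeriv k G lam * iteratedDeriv (m-k) (deriv (fe p (-τ))) lam)) * hfac
  rw [hsum, hpsiT]
  have step : ((t - τ : ℝ) : ℂ) * iteratedDeriv m (fun z => G z * H z) lam
      = ((-τ / p : ℝ) : ℂ) * iteratedDeriv m (deriv (fe p (t - τ))) lam := by
    rw [← iteratedDeriv_cmul_on Complex.isOpen_slitPlane hl _ m _ (hGa.mul hHa),
      ← iteratedDeriv_cmul_on Complex.isOpen_slitPlane hl _ m _ hKa]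
    apply Set.EqOn.iteratedDeriv_of_isOpen _ Complex.isOpen_slitPlane m hl
    intro z hz
    simpa [hG, mul_assoc] using key_ptwise p t τ hz
  calc ((t - τ : ℝ) : ℂ) * ((1 / (m.factorial : ℂ)) * iteratedDeriv m (fun z => G z * H z) lam)
      = (1 / (m.factorial : ℂ)) * (((t - τ : ℝ) : ℂ) * iteratedDeriv m (fun z => G z * H z) lam) := by ring
    _ = (1 / (m.factorial : ℂ)) * (((-τ / p : ℝ) : ℂ) * iteratedDeriv m (deriv (fe p (t - τ))) lam) := by rw [step]
    _ = _ := by ring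

lemma block_identity (p t τ : ℝ) (n : ℕ) {lam : ℂ} (hl : lam ∈ Complex.slitPlane) :
    ((t - τ : ℝ) : ℂ) • (BMat p n t lam * BTMat p n (-τ) lam)
      = ((-τ / p : ℝ) : ℂ) • BTMat p n (t - τ) lam := by
  ext i j
  simp only [Matrix.smul_apply, Matrix.mul_apply, BMat, BTMat, Matrix.of_apply, smul_eq_mul]
  by_cases hij : (i : ℕ) ≤ (j : ℕ)
  · rw [if_pos hij]
    set g : ℕ → ℂ := fun k =>
      (if (i : ℕ) ≤ k then psi p (k - (i : ℕ)) t lam else 0) *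
      (if k ≤ (j : ℕ) then psiT p ((j : ℕ) - k) (-τ) lam else 0) with hg
    have hfin : ∑ k : Fin n, (if (i : ℕ) ≤ (k : ℕ) then psi p ((k : ℕ) - (i : ℕ)) t lam else 0) *
        (if (k : ℕ) ≤ (j : ℕ) then psiT p ((j : ℕ) - (k : ℕ)) (-τ) lam else 0)
        = ∑ k ∈ range n, g k := Fin.sum_univ_eq_sum_range g n
    rw [hfin]
    have hsub : Finset.Ico (i : ℕ) ((j : ℕ) + 1) ⊆ range n := by
      intro k hk
      simp only [Finset.mem_Ico] at hk
      simp only [Finset.mem_range]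
      omega
    have hzero : ∀ k ∈ range n, k ∉ Finset.Ico (i : ℕ) ((j : ℕ) + 1) → g k = 0 := by
      intro k _ hk
      simp only [Finset.mem_Ico, not_and_or, not_le, not_lt] at hk
      rcases hk with hk | hk
      · rw [hg]; simp only [if_neg (by omega : ¬ (i : ℕ) ≤ k)]; ring
      · rw [hg]; simp only [if_neg (by omega : ¬ k ≤ (j : ℕ))]; ring
    rw [← Finset.sum_subset hsub hzero, Finset.sum_Ico_eq_sum_range]
    have hlen : (j : ℕ) + 1 - (i : ℕ) = ((j : ℕ) - (i : ℕ)) + 1 := by omega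
    rw [hlen]
    have hcongr : ∀ d ∈ range (((j : ℕ) - (i : ℕ)) + 1),
        g ((i : ℕ) + d) = psi p d t lam * psiT p (((j : ℕ) - (i : ℕ)) - d) (-τ) lam := by
      intro d hd
      have hd' : d ≤ (j : ℕ) - (i : ℕ) := by have := Finset.mem_range.mp hd; omega
      rw [hg]
      simp only
      rw [if_pos (by omega : (i : ℕ) ≤ (i : ℕ) + d), if_pos (by omega : (i : ℕ) + d ≤ (j : ℕ))]
      congr 2 <;> omega
    rw [Finset.sum_congr rfl hcongr]
    exact key_entry p t τ ((j : ℕ) - (i : ℕ)) hl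
  · rw [if_neg hij, Finset.sum_eq_zero, mul_zero, mul_zero]
    intro k _
    by_cases h1 : (i : ℕ) ≤ (k : ℕ)
    · rw [if_neg (by omega : ¬ (k : ℕ) ≤ (j : ℕ)), mul_zero]
    · rw [if_neg h1, zero_mul]

end Aux

theorem stmt_6 (S : JordanSetting) (t τ : ℝ) (ht : 0 < t) (hτ : 0 < τ) :
    ((t - τ : ℝ) : ℂ) • (S.B t * S.Bt (-τ)) = ((-τ / S.p : ℝ) : ℂ) • S.Bt (t - τ) := by
  rw [JordanSetting.B, JordanSetting.Bt, JordanSetting.Bt, ← Matrix.blockDiagonal'_mul,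
    ← Matrix.blockDiagonal'_smul, ← Matrix.blockDiagonal'_smul]
  apply congrArg
  funext j
  simp only [Pi.smul_apply]
  by_cases hj : (j : ℕ) < S.s
  · simp [hj]
  · simp only [if_neg hj]
    have hu := S.hunstable j (le_of_not_gt hj)
    have hl : S.eig j ∈ Complex.slitPlane := by
      rw [Complex.mem_slitPlane_iff_arg]
      refine ⟨fun h => ?_, S.heig j⟩
      have hpi := Real.pi_pos
      have hp1 := S.hp1
      have hp0 := S.hp0
      rw [h, abs_of_pos hpi] at hu
      nlinarith
    exact block_identity S.p t τ (S.nsz j) hl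
end

section
/- (Fixed points of T_σ are mild solutions.) In the block-diagonal Jordan setting, let f : ℂⁿ → ℂⁿ be continuous, σ ∈ E^s, and let x : [0,∞) → ℂⁿ be a bounded continuous fixed point of T_σ such that τ ↦ (p/τ) B̃(−τ) π_u f(x(τ)) is Bochner integrable on (0,∞). Then π_s x(0) = σ, π_u x(0) = ∫_0^∞ (p/τ) B̃(−τ) π_u f(x(τ)) dτ, and for all t ≥ 0, x(t) = E_p(t^p A) x(0) + ∫_0^t (t−τ)^{p−1} E_{p,p}((t−τ)^p A) f(x(τ)) dτ. -/
open MeasureTheory Filter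

/-!
At `t = 0` the fixed-point equation reads `x 0 = σ + I`, with `I` the integral over `(0, ∞)`.
The rows of `B̃` belonging to stable blocks vanish, so `I` has no stable coordinates; projecting
`x 0 = σ + I` gives the first two claims, and substituting `σ + I = x 0` into `T_σ x t = x t`
gives the third.
-/

/-- No integrability is needed: for non-integrable `g` the integral is `0`. -/
theorem ContinuousLinearMap.map_integral_eq_zero_of_forall {X E F 𝕜 : Type*}
    [MeasurableSpace X] {μ : Measure X} [RCLike 𝕜]
    [NormedAddCommGroup E] [NormedSpace ℝ E] [NormedSpace 𝕜 E] [CompleteSpace E]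
    [NormedAddCommGroup F] [NormedSpace ℝ F] [NormedSpace 𝕜 F] [CompleteSpace F]
    (L : E →L[𝕜] F) {g : X → E} (hg : ∀ a, L (g a) = 0) : L (∫ a, g a ∂μ) = 0 := by
  by_cases hint : Integrable g μ
  · simp [← L.integral_comp_comm hint, hg]
  · rw [integral_undef hint, map_zero]

theorem mvE_one {ι : Type*} [Fintype ι] [DecidableEq ι] (v : EuclideanSpace ℂ ι) :
    mvE (1 : Matrix ι ι ℂ) v = v := by
  rw [mvE, Matrix.toLpLin_apply, Matrix.one_mulVec, WithLp.toLp_ofLp]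

theorem mvE_add {ι : Type*} [Fintype ι] [DecidableEq ι] (M : Matrix ι ι ℂ)
    (u v : EuclideanSpace ℂ ι) : mvE M (u + v) = mvE M u + mvE M v :=
  map_add (Matrix.toEuclideanLin M) u v

namespace JordanSetting

variable (S : JordanSetting)

theorem pis_apply (v : ES S) (i : S.ix) :
    S.pis v i = if (i.1 : ℕ) < S.s then v i else 0 := rfl

theorem piu_apply (v : ES S) (i : S.ix) :
    S.piu v i = if S.s ≤ (i.1 : ℕ) then v i else 0 := rfl

noncomputable def pisCLM : ES S →L[ℂ] ES S :=
  LinearMap.toContinuousLinearMap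
    { toFun := S.pis
      map_add' := fun u v => by
        ext i
        simp only [pis_apply, PiLp.add_apply]
        split_ifs <;> simp
      map_smul' := fun c v => by
        ext i
        simp only [pis_apply, PiLp.smul_apply, RingHom.id_apply]
        split_ifs <;> simp }

@[simp] theorem pisCLM_apply (v : ES S) : S.pisCLM v = S.pis v := rfl

theorem pis_pis (v : ES S) : S.pis (S.pis v) = S.pis v := by
  ext i
  simp only [pis_apply]
  split_ifs <;> rfl

theorem pis_add_piu (v : ES S) : S.pis v + S.piu v = v := by
  ext i
  simp only [PiLp.add_apply, pis_apply, piu_apply]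
  split_ifs <;> first | omega | simp

theorem Bt_apply_eq_zero_of_stable (t : ℝ) {i : S.ix} (hi : (i.1 : ℕ) < S.s) (j : S.ix) :
    S.Bt t i j = 0 := by
  obtain ⟨i₁, a⟩ := i
  obtain ⟨j₁, b⟩ := j
  rcases eq_or_ne i₁ j₁ with rfl | h
  · simp only [Bt, Matrix.blockDiagonal'_apply_eq, if_pos hi, Matrix.zero_apply]
  · exact Matrix.blockDiagonal'_apply_ne _ _ _ h

theorem pis_mvE_Bt (t : ℝ) (v : ES S) : S.pis (mvE (S.Bt t) v) = 0 := by
  ext i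
  simp only [pis_apply, PiLp.zero_apply]
  split_ifs with hi
  · simp [mvE, Matrix.toLpLin_apply, Matrix.mulVec, dotProduct,
      S.Bt_apply_eq_zero_of_stable t hi]
  · rfl

theorem EP_zero : S.EP 0 = 1 := by
  rw [EP, Real.zero_rpow S.hp0.ne', Complex.ofReal_zero, zero_smul, mlEM,
    tsum_eq_single 0 fun k hk => by rw [zero_pow hk, smul_zero]]
  simp

end JordanSetting

theorem stmt_16_general (S : JordanSetting) (f : ES S → ES S)
    (σ : ES S) (hσ : σ ∈ Set.range S.pis)
    (x : ℝ → ES S)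
    (hfix : ∀ t ≥ (0 : ℝ), S.T f σ x t = x t) :
    S.pis (x 0) = σ ∧
      S.piu (x 0) = (∫ τ in Set.Ioi (0 : ℝ), (S.p / τ) • mvE (S.Bt (-τ)) (S.piu (f (x τ)))) ∧
      ∀ t ≥ (0 : ℝ),
        x t = mvE (S.EP t) (x 0)
          + ∫ τ in Set.Ioc (0 : ℝ) t, ((t - τ) ^ (S.p - 1)) • mvE (S.EPP (t - τ)) (f (x τ)) := by
  set I := ∫ τ in Set.Ioi (0 : ℝ), (S.p / τ) • mvE (S.Bt (-τ)) (S.piu (f (x τ)))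
  obtain ⟨y, rfl⟩ := hσ
  have hx0 : x 0 = S.pis y + I := by
    simpa [JordanSetting.T, S.EP_zero, mvE_one] using (hfix 0 le_rfl).symm
  have hpisI : S.pis I = 0 :=
    S.pisCLM.map_integral_eq_zero_of_forall fun τ => by
      rw [ContinuousLinearMap.map_smul_of_tower, S.pisCLM_apply, S.pis_mvE_Bt, smul_zero]
  have hpis : S.pis (x 0) = S.pis y := by
    rw [← S.pisCLM_apply, hx0, map_add, S.pisCLM_apply, S.pisCLM_apply, S.pis_pis, hpisI, add_zero]
  refine ⟨hpis, ?_, fun t ht => ?_⟩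
  · have := S.pis_add_piu (x 0)
    rw [hpis] at this
    nth_rewrite 2 [hx0] at this
    exact add_left_cancel this
  · rw [← hfix t ht, JordanSetting.T, hx0, mvE_add]

theorem stmt_16 (S : JordanSetting) (f : ES S → ES S) (hf : Continuous f)
    (σ : ES S) (hσ : σ ∈ Set.range S.pis)
    (x : ℝ → ES S) (hx : BC x)
    (hint : MeasureTheory.IntegrableOn
      (fun τ : ℝ => (S.p / τ) • mvE (S.Bt (-τ)) (S.piu (f (x τ)))) (Set.Ioi 0))
    (hfix : ∀ t ≥ (0 : ℝ), S.T f σ x t = x t) :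
    S.pis (x 0) = σ ∧
      S.piu (x 0) = (∫ τ in Set.Ioi (0 : ℝ), (S.p / τ) • mvE (S.Bt (-τ)) (S.piu (f (x τ)))) ∧
      ∀ t ≥ (0 : ℝ),
        x t = mvE (S.EP t) (x 0)
          + ∫ τ in Set.Ioc (0 : ℝ) t, ((t - τ) ^ (S.p - 1)) • mvE (S.EPP (t - τ)) (f (x τ)) :=
  stmt_16_general S f σ hσ x hfix
end
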